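/- arXiv:2402.15455 — 2 statements merged into one kernel-verified Lean document; each statement's English description precedes it below -/
import Mathlib

section
/- For n ≥ 1, the upper triangular matrix ring T_n(R) is a UQ ring if and only if R is a UQ ring. -/
/-- An element `a` of a ring is quasinilpotent if `1 - a*x` is a unit
for every `x` commuting with `a`. -/
def IsQuasinilpotent {R : Type*} [Ring R] (a : R) : Prop :=
  ∀ x : R, x * a = a * x → IsUnit (1 - a * x)

/-- A ring `R` is a UQ ring if `U(R) = 1 + QN(R)`. -/
def IsUQRing (R : Type*) [Ring R] : Prop :=
  ∀ u : R, IsUnit u ↔ ∃ q : R, IsQuasinilpotent q ∧ u = 1 + q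

/-- The subring of upper triangular `n × n` matrices over `R`. -/
def upperTriangularSubring (n : ℕ) (R : Type*) [Ring R] :
    Subring (Matrix (Fin n) (Fin n) R) where
  carrier := {M | ∀ i j : Fin n, j < i → M i j = 0}
  mul_mem' {A B} ha hb := by
    intro i j hij
    rw [Matrix.mul_apply]
    apply Finset.sum_eq_zero
    intro k _
    rcases lt_or_ge k i with h | h
    · rw [ha i k h, zero_mul]
    · rw [hb k j (lt_of_lt_of_le hij h), mul_zero]
  one_mem' i j hij := Matrix.one_apply_ne (ne_of_gt hij)
  add_mem' {A B} ha hb i j hij := by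
    simp [Matrix.add_apply, ha i j hij, hb i j hij]
  zero_mem' i j hij := rfl
  neg_mem' {A} ha i j hij := by simp [Matrix.neg_apply, ha i j hij]

/-!
Taking diagonals is a surjective ring homomorphism `T_n(R) → Rⁿ` split by the diagonal embedding,
and its kernel, the strictly upper triangular matrices, is nil, so a triangular matrix is a unit
exactly when its diagonal is. The UQ property descends along split surjections and lifts along
homomorphisms reflecting units, so `T_n(R)` is UQ iff `Rⁿ` is, which for `n ≥ 1` holds iff `R` is.
-/

section UQ

variable {R S : Type*} [Ring R] [Ring S]

theorem IsQuasinilpotent.isUnit_one_add {q : R} (hq : IsQuasinilpotent q) : IsUnit (1 + q) := by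
  simpa using hq (-1) (by simp)

theorem isUQRing_iff : IsUQRing R ↔ ∀ u : R, IsUnit u → IsQuasinilpotent (u - 1) := by
  refine ⟨fun h u hu => ?_, fun h u => ⟨fun hu => ⟨u - 1, h u hu, by abel⟩, ?_⟩⟩
  · obtain ⟨q, hq, rfl⟩ := (h u).1 hu
    simpa using hq
  · rintro ⟨q, hq, rfl⟩
    exact hq.isUnit_one_add

theorem IsUQRing.of_isLocalHom (f : R →+* S) [IsLocalHom f] (hS : IsUQRing S) : IsUQRing R := by
  rw [isUQRing_iff] at hS ⊢
  intro u hu x hx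
  have hfx : f x * (f u - 1) = (f u - 1) * f x := by
    simpa only [map_mul, map_sub, map_one] using congrArg f hx
  refine (isUnit_map_iff f _).1 ?_
  simpa only [map_mul, map_sub, map_one] using hS (f u) (hu.map f) (f x) hfx

theorem IsUQRing.of_leftInverse (f : R →+* S) (g : S →+* R) (hfg : Function.LeftInverse f g)
    (hR : IsUQRing R) : IsUQRing S := by
  rw [isUQRing_iff] at hR ⊢
  intro u hu x hx
  have hgx : g x * (g u - 1) = (g u - 1) * g x := by
    simpa only [map_mul, map_sub, map_one] using congrArg g hx
  simpa only [map_mul, map_sub, map_one, hfg _] using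
    (hR (g u) (hu.map g) (g x) hgx).map f

theorem isUQRing_iff_of_leftInverse (f : R →+* S) (g : S →+* R) (hfg : Function.LeftInverse f g)
    [IsLocalHom f] : IsUQRing R ↔ IsUQRing S :=
  ⟨IsUQRing.of_leftInverse f g hfg, IsUQRing.of_isLocalHom f⟩

theorem IsUQRing.pi {ι : Type*} {R : ι → Type*} [∀ i, Ring (R i)] (h : ∀ i, IsUQRing (R i)) :
    IsUQRing (∀ i, R i) := by
  rw [isUQRing_iff]
  intro u hu x hx
  rw [Pi.isUnit_iff]
  exact fun i => (isUQRing_iff.1 (h i)) (u i) (Pi.isUnit_iff.1 hu i) (x i) (congrFun hx i)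

theorem isUQRing_pi_const_iff {ι : Type*} [Nonempty ι] : IsUQRing (ι → R) ↔ IsUQRing R :=
  ⟨IsUQRing.of_leftInverse (Pi.evalRingHom _ (Classical.arbitrary ι)) (Pi.constRingHom ι R)
    fun _ => rfl, fun h => IsUQRing.pi fun _ => h⟩

/-- Since `ker f` is an ideal, `s = g (f s) * (1 + g (f s)⁻¹ * (s - g (f s)))` exhibits `s` as a
product of units whenever `f s` is a unit. -/
theorem isLocalHom_of_rightInverse (f : R →+* S) (g : S →+* R) (hfg : Function.LeftInverse f g)
    (hker : ∀ s, f s = 0 → IsUnit (1 + s)) : IsLocalHom f := by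
  refine ⟨fun s hs => ?_⟩
  obtain ⟨v, hv⟩ := hs.map g
  have hk : f (↑v⁻¹ * (s - g (f s))) = 0 := by
    rw [map_mul, map_sub, hfg, sub_self, mul_zero]
  have hs : s = v * (1 + ↑v⁻¹ * (s - g (f s))) := by
    rw [mul_add, mul_one, ← mul_assoc, Units.mul_inv, one_mul, hv, add_sub_cancel]
  rw [hs]
  exact v.isUnit.mul (hker _ hk)

end UQ

theorem Matrix.pow_eq_zero_of_forall_le_apply_eq_zero {R : Type*} [Semiring R] {n : ℕ}
    {N : Matrix (Fin n) (Fin n) R} (hN : ∀ i j, j ≤ i → N i j = 0) : N ^ n = 0 := by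
  have key : ∀ k : ℕ, ∀ i j : Fin n, (j : ℕ) < i + k → (N ^ k) i j = 0 := by
    intro k
    induction k with
    | zero =>
      intro i j hij
      exact Matrix.one_apply_ne (by omega)
    | succ k ih =>
      intro i j hij
      rw [pow_succ, Matrix.mul_apply]
      refine Finset.sum_eq_zero fun l _ => ?_
      rcases lt_or_ge (l : ℕ) (i + k) with hl | hl
      · rw [ih i l hl, zero_mul]
      · rw [hN l j (by omega), mul_zero]
  ext i j
  exact key n i j (by omega)

namespace upperTriangularSubring

variable {n : ℕ} {R : Type*} [Ring R]

theorem diag_mul {A B : Matrix (Fin n) (Fin n) R}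
    (hA : A ∈ upperTriangularSubring n R) (hB : B ∈ upperTriangularSubring n R) (i : Fin n) :
    (A * B) i i = A i i * B i i := by
  rw [Matrix.mul_apply]
  refine Fintype.sum_eq_single i fun k hk => ?_
  rcases lt_or_gt_of_ne hk with h | h
  · rw [hA i k h, zero_mul]
  · rw [hB k i h, mul_zero]

variable (n R)

def diagHom : upperTriangularSubring n R →+* (Fin n → R) where
  toFun M := Matrix.diag M
  map_one' := Matrix.diag_one
  map_mul' A B := funext (diag_mul A.2 B.2)
  map_zero' := Matrix.diag_zero
  map_add' _ _ := Matrix.diag_add _ _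

def diagonalHom : (Fin n → R) →+* upperTriangularSubring n R :=
  (Matrix.diagonalRingHom (Fin n) R).codRestrict _ fun d _ _ h =>
    Matrix.diagonal_apply_ne d (ne_of_gt h)

theorem diagHom_leftInverse : Function.LeftInverse (diagHom n R) (diagonalHom n R) :=
  fun d => Matrix.diag_diagonal d

theorem isNilpotent_of_diagHom_eq_zero (M : upperTriangularSubring n R) (hM : diagHom n R M = 0) :
    IsNilpotent M := by
  refine ⟨n, Subtype.ext ?_⟩
  rw [SubmonoidClass.coe_pow]
  refine Matrix.pow_eq_zero_of_forall_le_apply_eq_zero fun i j hji => ?_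
  rcases hji.lt_or_eq with h | rfl
  · exact M.2 i j h
  · exact congrFun hM j

instance : IsLocalHom (diagHom n R) :=
  isLocalHom_of_rightInverse _ _ (diagHom_leftInverse n R) fun M hM =>
    (isNilpotent_of_diagHom_eq_zero n R M hM).isUnit_one_add

end upperTriangularSubring

theorem upper_triangular_uq (n : ℕ) (hn : 1 ≤ n) (R : Type*) [Ring R] :
    IsUQRing (upperTriangularSubring n R) ↔ IsUQRing R := by
  have : Nonempty (Fin n) := ⟨⟨0, hn⟩⟩
  rw [isUQRing_iff_of_leftInverse _ _ (upperTriangularSubring.diagHom_leftInverse n R)]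
  exact isUQRing_pi_const_iff
end

section
/- In a UQ ring R, the element 2 belongs to the Jacobson radical J(R). -/
/-!
Since `-1` is a unit, the UQ property writes it as `1 + q` with `q` quasinilpotent, forcing
`q = -2`. Hence `2` is quasinilpotent, and a central quasinilpotent element lies in the
Jacobson radical: `1 + y * 2 = 1 - 2 * (-y)` is a unit for every `y`.
-/

section

variable {R : Type*} [Ring R]

theorem IsQuasinilpotent.neg {a : R} (ha : IsQuasinilpotent a) : IsQuasinilpotent (-a) := by
  intro x hx
  have hxa : -x * a = a * -x := by simpa only [mul_neg, neg_mul, neg_inj] using hx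
  simpa only [neg_mul, mul_neg] using ha (-x) hxa

theorem IsQuasinilpotent.mem_jacobson_bot {a : R} (ha : IsQuasinilpotent a)
    (hcomm : ∀ x, Commute a x) : a ∈ (⊥ : Ideal R).jacobson := by
  refine Ideal.mem_jacobson_iff.mpr fun y => ?_
  obtain ⟨u, hu⟩ := ha (-y) (hcomm (-y)).eq.symm
  refine ⟨↑u⁻¹, ?_⟩
  have hu' : (u : R) = 1 + y * a := by rw [hu, mul_neg, sub_neg_eq_add, (hcomm y).eq]
  rw [Ideal.mem_bot, mul_assoc, ← mul_add_one, add_comm, ← hu', u.inv_mul, sub_self]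

theorem IsUQRing.isQuasinilpotent_sub_one (hR : IsUQRing R) {u : R} (hu : IsUnit u) :
    IsQuasinilpotent (u - 1) := by
  obtain ⟨q, hq, rfl⟩ := (hR u).mp hu
  rwa [add_sub_cancel_left]

end

theorem uq_two_mem_jacobson {R : Type*} [Ring R] (hR : IsUQRing R) :
    (2 : R) ∈ (⊥ : Ideal R).jacobson := by
  have hq : IsQuasinilpotent (-1 - 1 : R) := hR.isQuasinilpotent_sub_one isUnit_one.neg
  have h2 : IsQuasinilpotent (2 : R) := by
    simpa only [neg_sub, sub_neg_eq_add, one_add_one_eq_two] using hq.neg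
  exact h2.mem_jacobson_bot (Nat.cast_commute 2)
end
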